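/- arXiv:2001.02326 — 2 statements merged into one kernel-verified Lean document; each statement's English description precedes it below -/
import Mathlib

section
/- If a continuous nonnegative integrable f : ℝ → ℝ with ‖f‖_{L¹} > 0 maximizes F(f) = (min_{t∈[0,1]} ∫_ℝ f(x)f(x+t) dx)/‖f‖_{L¹}², then for every x₁ ∈ ℝ, min_{t∈[0,1]} [f(x₁−t) + f(x₁+t)] ≤ (2/‖f‖_{L¹})·min_{t∈[0,1]} ∫_ℝ f(x) f(x+t) dx. -/
/-!
Adding to a maximiser `f` the bump `ε • 1_[x₁ - ε/2, x₁ + ε/2]` of mass `ε²` cannot increase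
`F`. For each shift `t ∈ [0, 1]` the bump raises the correlation `∫ f(x) f(x + t)` by at least
`ε² (f(x₁ - t) + f(x₁ + t)) - o(ε²)`, uniformly in `t` by uniform continuity, whereas
`‖f‖₁²` grows only by `2 ε² ‖f‖₁ + ε⁴`. Comparing the `ε²` terms and letting `ε → 0` gives the
inequality. Testing maximality against `1_[0, 2]` shows that the optimal minimal correlation is
positive, so no correlation of `f` can be a non-integrable (junk value `0`) integral.
-/

open MeasureTheory Set Filter Topology

lemma integrable_indicator_one {X : Type*} [MeasurableSpace X] {μ : Measure X} {s : Set X}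
    (hs : MeasurableSet s) (hμs : μ s ≠ ⊤) : Integrable (s.indicator (1 : X → ℝ)) μ :=
  (integrableOn_const hμs).integrable_indicator hs

lemma integrable_add_smul_indicator_one {X : Type*} [MeasurableSpace X] {μ : Measure X}
    {f : X → ℝ} {s : Set X} (hf : Integrable f μ) (hs : MeasurableSet s) (hμs : μ s ≠ ⊤) (ε : ℝ) :
    Integrable (f + ε • s.indicator (1 : X → ℝ)) μ :=
  hf.add ((integrable_indicator_one hs hμs).smul ε)

lemma integral_add_smul_indicator_one {X : Type*} [MeasurableSpace X] {μ : Measure X}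
    {f : X → ℝ} {s : Set X} (hf : Integrable f μ) (hs : MeasurableSet s) (hμs : μ s ≠ ⊤) (ε : ℝ) :
    ∫ x, (f + ε • s.indicator (1 : X → ℝ)) x ∂μ = ∫ x, f x ∂μ + ε * μ.real s := by
  rw [integral_add' hf ((integrable_indicator_one hs hμs).smul ε)]
  simp only [Pi.smul_apply, smul_eq_mul]
  rw [integral_const_mul, integral_indicator_one hs]

lemma indicator_one_mul_indicator_one_comp_add {α : Type*} [Add α] (s : Set α) (t x : α) :
    s.indicator (1 : α → ℝ) x * s.indicator 1 (x + t) = (s ∩ (· + t) ⁻¹' s).indicator 1 x := by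
  rw [inter_indicator_one, Pi.mul_apply, ← indicator_comp_right (· + t)]
  rfl

lemma add_smul_indicator_mul_comp_add {α : Type*} [Add α] (f : α → ℝ) (s : Set α) (ε : ℝ)
    (t x : α) :
    (f + ε • s.indicator (1 : α → ℝ)) x * (f + ε • s.indicator (1 : α → ℝ)) (x + t)
      = f x * f (x + t) + ε * ((· + t) ⁻¹' s).indicator f x
        + ε * s.indicator (fun y => f (y + t)) x + ε ^ 2 * (s ∩ (· + t) ⁻¹' s).indicator 1 x := by
  by_cases hx : x ∈ s <;> by_cases hxt : x + t ∈ s <;> simp [hx, hxt] <;> ring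

lemma le_integral_add_smul_indicator_mul_comp_add {G : Type*} [MeasurableSpace G] [AddGroup G]
    [MeasurableAdd G] {μ : Measure G} [μ.IsAddRightInvariant] {f : G → ℝ} {s : Set G}
    (hs : MeasurableSet s) (hμs : μ s ≠ ⊤) {ε c₁ c₂ : ℝ} {t : G} (hε : 0 ≤ ε)
    (hf : Integrable f μ) (hft : Integrable (fun x => f x * f (x + t)) μ)
    (h₁ : ∀ x, x + t ∈ s → c₁ ≤ f x) (h₂ : ∀ x ∈ s, c₂ ≤ f (x + t)) :
    ∫ x, f x * f (x + t) ∂μ + ε * μ.real s * (c₁ + c₂)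
      ≤ ∫ x, (f + ε • s.indicator (1 : G → ℝ)) x
          * (f + ε • s.indicator (1 : G → ℝ)) (x + t) ∂μ := by
  have hs' : MeasurableSet ((· + t) ⁻¹' s) := hs.preimage (measurable_add_const t)
  have hμs' : μ ((· + t) ⁻¹' s) = μ s := measure_preimage_add_right μ t s
  have hI₁ : Integrable (((· + t) ⁻¹' s).indicator f) μ := hf.indicator hs'
  have hI₂ : Integrable (s.indicator fun y => f (y + t)) μ := (hf.comp_add_right t).indicator hs
  have hI₃ : Integrable ((s ∩ (· + t) ⁻¹' s).indicator (1 : G → ℝ)) μ :=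
    integrable_indicator_one (hs.inter hs')
      ((measure_mono inter_subset_left).trans_lt hμs.lt_top).ne
  simp_rw [add_smul_indicator_mul_comp_add]
  rw [integral_add (by exact (hft.add (hI₁.const_mul ε)).add (hI₂.const_mul ε)) (hI₃.const_mul _),
    integral_add (by exact hft.add (hI₁.const_mul ε)) (hI₂.const_mul ε),
    integral_add hft (hI₁.const_mul ε), integral_const_mul, integral_const_mul, integral_const_mul,
    integral_indicator hs', integral_indicator hs]
  have hb₁ : c₁ * μ.real s ≤ ∫ x in (· + t) ⁻¹' s, f x ∂μ := by
    simpa only [measureReal_def, hμs'] using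
      setIntegral_ge_of_const_le_real hs' (hμs' ▸ hμs) h₁ hf.integrableOn
  have hb₂ : c₂ * μ.real s ≤ ∫ x in s, f (x + t) ∂μ :=
    setIntegral_ge_of_const_le_real hs hμs h₂ (hf.comp_add_right t).integrableOn
  have hb₃ : 0 ≤ ∫ x, (s ∩ (· + t) ⁻¹' s).indicator (1 : G → ℝ) x ∂μ :=
    integral_nonneg (indicator_nonneg fun _ _ => zero_le_one)
  linarith [mul_le_mul_of_nonneg_left hb₁ hε, mul_le_mul_of_nonneg_left hb₂ hε,
    mul_nonneg (sq_nonneg ε) hb₃]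

lemma Continuous.eventually_sub_le_of_abs_sub_le {f : ℝ → ℝ} (hf : Continuous f) (a b : ℝ)
    {δ : ℝ} (hδ : 0 < δ) :
    ∀ᶠ ε in 𝓝 (0:ℝ), ∀ y ∈ Icc a b, ∀ x, |x - y| ≤ ε → f y - δ ≤ f x := by
  have huc : UniformContinuousOn f (Icc (a - 1) (b + 1)) :=
    isCompact_Icc.uniformContinuousOn_of_continuous hf.continuousOn
  obtain ⟨η, hη, hclose⟩ := Metric.uniformContinuousOn_iff.1 huc δ hδ
  filter_upwards [Iio_mem_nhds (lt_min one_pos hη)] with ε hε y ⟨hay, hyb⟩ x hxy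
  have hε₁ : ε < 1 := hε.trans_le (min_le_left _ _)
  have hεη : ε < η := hε.trans_le (min_le_right _ _)
  have hxy' := abs_le.1 hxy
  have := hclose x ⟨by linarith, by linarith⟩ y ⟨by linarith, by linarith⟩
    (by rw [Real.dist_eq]; linarith)
  rw [Real.dist_eq, abs_lt] at this
  linarith

lemma le_two_div_mul_add_of_div_sq_le {M N ε K : ℝ} (hN : 0 < N) (hε : 0 < ε)
    (h : (M + ε ^ 2 * K) / (N + ε ^ 2) ^ 2 ≤ M / N ^ 2) :
    K ≤ 2 / N * M + M * ε ^ 2 / N ^ 2 := by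
  rw [div_le_div_iff₀ (by positivity) (by positivity)] at h
  have hK : K * N ^ 2 ≤ 2 * M * N + M * ε ^ 2 :=
    le_of_mul_le_mul_left (by nlinarith) (by positivity : 0 < ε ^ 2)
  rw [div_mul_eq_mul_div, div_add_div _ _ hN.ne' (by positivity), le_div_iff₀ (by positivity)]
  nlinarith

noncomputable def minAutocorr (g : ℝ → ℝ) : ℝ :=
  sInf ((fun t => ∫ x, g x * g (x + t)) '' Icc (0:ℝ) 1)

lemma le_minAutocorr {g : ℝ → ℝ} {c : ℝ}
    (h : ∀ t ∈ Icc (0:ℝ) 1, c ≤ ∫ x, g x * g (x + t)) : c ≤ minAutocorr g :=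
  le_csInf ((nonempty_Icc.2 zero_le_one).image _) (forall_mem_image.2 h)

lemma minAutocorr_le {g : ℝ → ℝ} (hg : ∀ x, 0 ≤ g x) {t : ℝ} (ht : t ∈ Icc (0:ℝ) 1) :
    minAutocorr g ≤ ∫ x, g x * g (x + t) :=
  csInf_le ⟨0, forall_mem_image.2 fun _ _ => integral_nonneg fun x => mul_nonneg (hg x) (hg _)⟩
    (mem_image_of_mem _ ht)

lemma integrable_mul_comp_add_of_minAutocorr_pos {g : ℝ → ℝ} (hg : ∀ x, 0 ≤ g x)
    (hpos : 0 < minAutocorr g) {t : ℝ} (ht : t ∈ Icc (0:ℝ) 1) :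
    Integrable (fun x => g x * g (x + t)) := by
  by_contra h
  have := minAutocorr_le hg ht
  rw [integral_undef h] at this
  linarith

lemma one_le_minAutocorr_indicator_Icc : 1 ≤ minAutocorr ((Icc (0:ℝ) 2).indicator 1) := by
  refine le_minAutocorr fun t ⟨ht0, ht1⟩ => ?_
  simp_rw [indicator_one_mul_indicator_one_comp_add]
  have hs : MeasurableSet (Icc (0:ℝ) 2 ∩ (· + t) ⁻¹' Icc 0 2) :=
    measurableSet_Icc.inter (measurableSet_Icc.preimage (measurable_add_const t))
  rw [integral_indicator_one hs]
  calc (1:ℝ) = volume.real (Icc (0:ℝ) 1) := by simp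
    _ ≤ _ := by
      refine measureReal_mono ?_ ((measure_mono inter_subset_left).trans_lt measure_Icc_lt_top).ne
      rintro x ⟨hx0, hx1⟩
      exact ⟨⟨hx0, by linarith⟩, by simp only [mem_preimage, mem_Icc]; constructor <;> linarith⟩

lemma minAutocorr_pos_of_forall_div_sq_le {f : ℝ → ℝ} (hnorm : 0 < ∫ x, f x)
    (hmax : ∀ g : ℝ → ℝ, Integrable g → (∀ x, 0 ≤ g x) →
      minAutocorr g / (∫ x, g x) ^ 2 ≤ minAutocorr f / (∫ x, f x) ^ 2) :
    0 < minAutocorr f := by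
  have hbox := hmax ((Icc (0:ℝ) 2).indicator 1)
    (integrable_indicator_one measurableSet_Icc measure_Icc_lt_top.ne)
    (indicator_nonneg fun _ _ => zero_le_one)
  rw [integral_indicator_one measurableSet_Icc, Real.volume_real_Icc_of_le zero_le_two] at hbox
  have := one_le_minAutocorr_indicator_Icc
  exact (div_pos_iff_of_pos_right (by positivity)).1 (lt_of_lt_of_le (by positivity) hbox)

lemma le_minAutocorr_add_smul_indicator_Icc {f : ℝ → ℝ} (hf : Integrable f)
    (hpos : ∀ x, 0 ≤ f x) (hM : 0 < minAutocorr f) {x₁ ε δ : ℝ} (hε : 0 < ε)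
    (hclose : ∀ y ∈ Icc (x₁ - 1) (x₁ + 1), ∀ x, |x - y| ≤ ε → f y - δ ≤ f x) :
    minAutocorr f + ε ^ 2 * (sInf ((fun t => f (x₁ - t) + f (x₁ + t)) '' Icc (0:ℝ) 1) - 2 * δ)
      ≤ minAutocorr (f + ε • (Icc (x₁ - ε / 2) (x₁ + ε / 2)).indicator 1) := by
  refine le_minAutocorr fun t ht => ?_
  have hL : sInf ((fun t => f (x₁ - t) + f (x₁ + t)) '' Icc (0:ℝ) 1)
      ≤ f (x₁ - t) + f (x₁ + t) :=
    csInf_le ⟨0, forall_mem_image.2 fun _ _ => add_nonneg (hpos _) (hpos _)⟩ (mem_image_of_mem _ ht)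
  have hbump := le_integral_add_smul_indicator_mul_comp_add
    (measurableSet_Icc (a := x₁ - ε / 2) (b := x₁ + ε / 2))
    measure_Icc_lt_top.ne hε.le hf (integrable_mul_comp_add_of_minAutocorr_pos hpos hM ht)
    (c₁ := f (x₁ - t) - δ) (c₂ := f (x₁ + t) - δ)
    (fun x hx => hclose _ ⟨by linarith [ht.2], by linarith [ht.1]⟩ _
      (abs_le.2 ⟨by linarith [hx.1], by linarith [hx.2]⟩))
    (fun x hx => hclose _ ⟨by linarith [ht.1], by linarith [ht.2]⟩ _
      (abs_le.2 ⟨by linarith [hx.1], by linarith [hx.2]⟩))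
  rw [Real.volume_real_Icc_of_le (by linarith)] at hbump
  linarith [minAutocorr_le hpos ht, mul_le_mul_of_nonneg_left hL (sq_nonneg ε)]

theorem maximizer_first_condition (f : ℝ → ℝ)
    (hcont : Continuous f) (hf : Integrable f) (hpos : ∀ x, 0 ≤ f x)
    (hnorm : 0 < ∫ x, f x)
    (hmax : ∀ g : ℝ → ℝ, Integrable g → (∀ x, 0 ≤ g x) →
      sInf ((fun t => ∫ x, g x * g (x + t)) '' Icc (0:ℝ) 1) / (∫ x, g x)^2
        ≤ sInf ((fun t => ∫ x, f x * f (x + t)) '' Icc (0:ℝ) 1) / (∫ x, f x)^2) :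
    ∀ x₁ : ℝ, sInf ((fun t => f (x₁ - t) + f (x₁ + t)) '' Icc (0:ℝ) 1)
      ≤ (2 / ∫ x, f x) * sInf ((fun t => ∫ x, f x * f (x + t)) '' Icc (0:ℝ) 1) := by
  intro x₁
  set L := sInf ((fun t => f (x₁ - t) + f (x₁ + t)) '' Icc (0:ℝ) 1)
  set N := ∫ x, f x
  change L ≤ 2 / N * minAutocorr f
  have hM : 0 < minAutocorr f := minAutocorr_pos_of_forall_div_sq_le hnorm hmax
  refine le_of_forall_pos_le_add fun δ hδ => ?_
  have hbound : ∀ᶠ ε in 𝓝[>] 0,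
      L - 2 * (δ / 2) ≤ 2 / N * minAutocorr f + minAutocorr f * ε ^ 2 / N ^ 2 := by
    filter_upwards [self_mem_nhdsWithin, nhdsWithin_le_nhds
      (hcont.eventually_sub_le_of_abs_sub_le (x₁ - 1) (x₁ + 1) (half_pos hδ))]
      with ε (hε : 0 < ε) hclose
    have hJ : volume (Icc (x₁ - ε / 2) (x₁ + ε / 2)) ≠ ⊤ := measure_Icc_lt_top.ne
    have hratio := hmax _ (integrable_add_smul_indicator_one hf measurableSet_Icc hJ ε)
      fun x => add_nonneg (hpos x) (mul_nonneg hε.le (indicator_nonneg (fun _ _ => zero_le_one) x))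
    rw [integral_add_smul_indicator_one hf measurableSet_Icc hJ,
      Real.volume_real_Icc_of_le (by linarith),
      show ε * (x₁ + ε / 2 - (x₁ - ε / 2)) = ε ^ 2 by ring] at hratio
    exact le_two_div_mul_add_of_div_sq_le hnorm hε <| (div_le_div_of_nonneg_right
      (le_minAutocorr_add_smul_indicator_Icc hf hpos hM hε hclose) (by positivity)).trans hratio
  have hlim : Tendsto (fun ε : ℝ => 2 / N * minAutocorr f + minAutocorr f * ε ^ 2 / N ^ 2)
      (𝓝[>] 0) (𝓝 (2 / N * minAutocorr f)) :=
    tendsto_nhdsWithin_of_tendsto_nhds (Continuous.tendsto' (by fun_prop) 0 _ (by simp))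
  linarith [ge_of_tendsto hlim hbound]
end

section
/- Let f : ℝ → ℝ be continuous and integrable, x₁ ∈ ℝ, g_ε = ε·χ_{[x₁−ε/2,x₁+ε/2]}. Then the perturbed autocorrelation expands as ∫_ℝ (f+g_ε)(x)(f+g_ε)(x+t) dx = ∫_ℝ f(x)f(x+t) dx + ε²·[f(x₁−t) + f(x₁+t)] + o(ε²), uniformly for t in [0,1]. -/
open MeasureTheory Set Filter Topology

/-!
Expanding the product, the autocorrelation of `f + g_ε` is that of `f` plus two cross terms plus
the autocorrelation of `g_ε`. After a translation each cross term is `ε` times the integral of `f`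
over an interval of length `ε` centred at `x₁ ± t`, which is `ε² f(x₁ ± t)` up to `ε²` times the
oscillation of `f` on that interval; the last term is at most `ε³`. Since `f` is uniformly
continuous at the compact set `[x₁ - 1, x₁ + 1]`, the oscillations are small uniformly in
`t ∈ [0, 1]`.
-/

theorem IsCompact.eventually_forall_dist_le {α β : Type*} [PseudoMetricSpace α]
    [PseudoMetricSpace β] {K : Set α} (hK : IsCompact K) {f : α → β}
    (hf : ∀ a ∈ K, ContinuousAt f a) {δ : ℝ} (hδ : 0 < δ) :
    ∀ᶠ r in 𝓝 (0 : ℝ), ∀ c ∈ K, ∀ x, dist x c ≤ r → dist (f x) (f c) ≤ δ := by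
  obtain ⟨η, hη, hU⟩ := Metric.mem_uniformity_dist.1
    (hK.uniformContinuousAt_of_continuousAt f hf (Metric.dist_mem_uniformity hδ))
  filter_upwards [Iio_mem_nhds hη] with r hr c hc x hx
  rw [dist_comm]
  exact (hU (a := c) (b := x) (by rw [dist_comm]; exact hx.trans_lt hr) hc).le

theorem integral_add_mul_add {α : Type*} [MeasurableSpace α] {μ : Measure α} {f g u v : α → ℝ}
    (hfu : Integrable (fun x => f x * u x) μ) (hgu : Integrable (fun x => g x * u x) μ)
    (hfv : Integrable (fun x => f x * v x) μ) (hgv : Integrable (fun x => g x * v x) μ) :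
    ∫ x, (f x + g x) * (u x + v x) ∂μ =
      (∫ x, f x * u x ∂μ) + (∫ x, g x * u x ∂μ) + (∫ x, f x * v x ∂μ) + ∫ x, g x * v x ∂μ := by
  simp_rw [add_mul, mul_add]
  rw [integral_add (f := fun x => f x * u x + f x * v x) (g := fun x => g x * u x + g x * v x)
      (hfu.add hfv) (hgu.add hgv),
    integral_add hfu hfv, integral_add hgu hgv]
  ring

/-- The paper's `g_ε` centred at `c`: height `ε` on an interval of length `ε`. -/
noncomputable def bump (c ε : ℝ) : ℝ → ℝ := (Icc (c - ε / 2) (c + ε / 2)).indicator fun _ => ε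

theorem bump_add_right (c ε t x : ℝ) : bump c ε (x + t) = bump (c - t) ε x := by
  rw [bump, bump, ← indicator_comp_right (· + t), preimage_add_const_Icc, sub_right_comm,
    add_sub_right_comm]
  rfl

theorem integrable_bump (c ε : ℝ) : Integrable (bump c ε) :=
  (integrable_indicator_iff measurableSet_Icc).2 (integrableOn_const measure_Icc_lt_top.ne)

theorem norm_bump_le {ε : ℝ} (hε : 0 ≤ ε) (c x : ℝ) : ‖bump c ε x‖ ≤ ε := by
  rw [bump, norm_indicator_eq_indicator_norm, Real.norm_of_nonneg hε]
  exact indicator_le_self' (fun _ _ => hε) x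

theorem integral_bump_mul (c ε : ℝ) (h : ℝ → ℝ) :
    ∫ x, bump c ε x * h x = ε * ∫ x in Icc (c - ε / 2) (c + ε / 2), h x := by
  simp_rw [bump, ← indicator_mul_left]
  rw [integral_indicator measurableSet_Icc, integral_const_mul]

theorem abs_integral_bump_mul_sub_le {c ε a η : ℝ} {h : ℝ → ℝ} (hε : 0 ≤ ε)
    (hh : IntegrableOn h (Icc (c - ε / 2) (c + ε / 2)))
    (hclose : ∀ x ∈ Icc (c - ε / 2) (c + ε / 2), |h x - a| ≤ η) :
    |(∫ x, bump c ε x * h x) - ε ^ 2 * a| ≤ ε ^ 2 * η := by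
  have hvol : volume.real (Icc (c - ε / 2) (c + ε / 2)) = ε := by
    rw [Real.volume_real_Icc, max_eq_left (by linarith)]
    ring
  have hmean : ∫ x in Icc (c - ε / 2) (c + ε / 2), (h x - a) =
      (∫ x in Icc (c - ε / 2) (c + ε / 2), h x) - ε * a := by
    rw [integral_sub hh (integrableOn_const measure_Icc_lt_top.ne), setIntegral_const, hvol,
      smul_eq_mul]
  have hdev : |∫ x in Icc (c - ε / 2) (c + ε / 2), (h x - a)| ≤ η * ε := by
    simpa only [hvol, Real.norm_eq_abs] using
      norm_setIntegral_le_of_norm_le_const (μ := volume) measure_Icc_lt_top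
        fun x hx => (Real.norm_eq_abs _).trans_le (hclose x hx)
  calc |(∫ x, bump c ε x * h x) - ε ^ 2 * a|
      = ε * |∫ x in Icc (c - ε / 2) (c + ε / 2), (h x - a)| := by
        rw [integral_bump_mul, hmean, show ε ^ 2 * a = ε * (ε * a) by ring, ← mul_sub, abs_mul,
          abs_of_nonneg hε]
    _ ≤ ε * (η * ε) := by gcongr
    _ = ε ^ 2 * η := by ring

noncomputable def autocorr (f : ℝ → ℝ) (t : ℝ) : ℝ := ∫ x, f x * f (x + t)

theorem abs_autocorr_add_bump_sub_le {f : ℝ → ℝ} (hf : Integrable f)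
    {x₁ ε η t : ℝ} (hff : Integrable (fun x => f x * f (x + t))) (hε : 0 ≤ ε)
    (hplus : ∀ x ∈ Icc (x₁ + t - ε / 2) (x₁ + t + ε / 2), |f x - f (x₁ + t)| ≤ η)
    (hminus : ∀ x ∈ Icc (x₁ - t - ε / 2) (x₁ - t + ε / 2), |f x - f (x₁ - t)| ≤ η) :
    |autocorr (f + bump x₁ ε) t - autocorr f t - ε ^ 2 * (f (x₁ - t) + f (x₁ + t))| ≤
      ε ^ 2 * (2 * η + ε) := by
  simp only [autocorr, Pi.add_apply]
  have hgt : Integrable (fun x => bump x₁ ε (x + t)) := (integrable_bump x₁ ε).comp_add_right t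
  have hg := (integrable_bump x₁ ε).aestronglyMeasurable
  have hbdd := ae_of_all volume (norm_bump_le hε x₁)
  rw [integral_add_mul_add hff ((hf.comp_add_right t).bdd_mul hg hbdd)
    (hf.mul_bdd hgt.aestronglyMeasurable (ae_of_all _ fun x => norm_bump_le hε x₁ (x + t)))
    (hgt.bdd_mul hg hbdd)]
  have hshift_plus : ∫ x, bump x₁ ε x * f (x + t) = ∫ x, bump (x₁ + t) ε x * f x := by
    rw [← integral_add_right_eq_self (fun x => bump (x₁ + t) ε x * f x) t]
    simp only [bump_add_right, add_sub_cancel_right]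
  have hshift_minus : ∫ x, f x * bump x₁ ε (x + t) = ∫ x, bump (x₁ - t) ε x * f x := by
    simp only [bump_add_right, mul_comm]
  have hquad : |∫ x, bump x₁ ε x * bump x₁ ε (x + t)| ≤ ε ^ 2 * ε := by
    simpa using abs_integral_bump_mul_sub_le (a := 0) hε hgt.integrableOn fun x _ => by
      simpa using norm_bump_le hε x₁ (x + t)
  have hplus' := abs_integral_bump_mul_sub_le hε hf.integrableOn hplus
  have hminus' := abs_integral_bump_mul_sub_le hε hf.integrableOn hminus
  rw [hshift_plus, hshift_minus]
  calc _ = |((∫ x, bump (x₁ + t) ε x * f x) - ε ^ 2 * f (x₁ + t))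
        + ((∫ x, bump (x₁ - t) ε x * f x) - ε ^ 2 * f (x₁ - t))
        + ∫ x, bump x₁ ε x * bump x₁ ε (x + t)| := by congr 1; ring
    _ ≤ ε ^ 2 * η + ε ^ 2 * η + ε ^ 2 * ε := (abs_add_three _ _ _).trans (by gcongr)
    _ = ε ^ 2 * (2 * η + ε) := by ring

theorem perturbed_autocorr_expansion (f : ℝ → ℝ) (hcont : Continuous f)
    (hf : Integrable f) (M : ℝ) (hbd : ∀ x, |f x| ≤ M) (x₁ : ℝ) :
    Tendsto (fun ε : ℝ => sSup ((fun t =>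
        |(∫ x, (f x + (Icc (x₁ - ε/2) (x₁ + ε/2)).indicator (fun _ => ε) x) *
              (f (x + t) + (Icc (x₁ - ε/2) (x₁ + ε/2)).indicator (fun _ => ε) (x + t)))
          - (∫ x, f x * f (x + t))
          - ε^2 * (f (x₁ - t) + f (x₁ + t))| / ε^2) '' Icc (0:ℝ) 1))
      (nhdsWithin 0 (Ioi 0)) (nhds 0) := by
  refine tendsto_order.2 ⟨fun a ha => Eventually.of_forall fun ε => ha.trans_le <|
    Real.sSup_nonneg <| by rintro _ ⟨t, -, rfl⟩; positivity, fun δ hδ => ?_⟩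
  have hnear := (isCompact_Icc (a := x₁ - 1) (b := x₁ + 1)).eventually_forall_dist_le
    (fun a _ => hcont.continuousAt) (show 0 < δ / 4 by positivity)
  filter_upwards [self_mem_nhdsWithin, nhdsWithin_le_nhds (hnear.and (Iio_mem_nhds (half_pos hδ)))]
    with ε (hε : 0 < ε) ⟨hclose, hεδ⟩
  have hclose' : ∀ c ∈ Icc (x₁ - 1) (x₁ + 1), ∀ x ∈ Icc (c - ε / 2) (c + ε / 2),
      |f x - f c| ≤ δ / 4 := fun c hc x hx => by
    rw [← Real.dist_eq]
    refine hclose c hc x ?_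
    rw [Real.dist_eq, abs_le]
    constructor <;> linarith [hx.1, hx.2]
  refine (Real.sSup_le ?_ (by positivity)).trans_lt (show 2 * (δ / 4) + ε < δ by linarith)
  rintro _ ⟨t, ⟨ht0, ht1⟩, rfl⟩
  rw [div_le_iff₀ (by positivity)]
  have hff : Integrable (fun x => f x * f (x + t)) :=
    (hf.comp_add_right t).bdd_mul hf.aestronglyMeasurable
      (ae_of_all _ fun x => by simpa using hbd x)
  exact (abs_autocorr_add_bump_sub_le hf hff hε.le
    (hclose' (x₁ + t) ⟨by linarith, by linarith⟩)
    (hclose' (x₁ - t) ⟨by linarith, by linarith⟩)).trans_eq (mul_comm _ _)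
end
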